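/- arXiv:1807.00034 — 2 statements merged into one kernel-verified Lean document; each statement's English description precedes it below -/
import Mathlib

section
/- Let α > 0. Then the sequence of exceptional zeros of the X₁-Laguerre polynomials is strictly increasing and bounded above by −α; that is, x̂_{n,1}^{(α)} < x̂_{n+1,1}^{(α)} < −α for every n ≥ 1, so that −(α+1) = x̂_{1,1}^{(α)} < … < x̂_{n−1,1}^{(α)} < x̂_{n,1}^{(α)} < … < −α. -/
/-!
Write `L_n = L_n^{(α)}` and `L̂_n = L̂_n^{(α)}`. Let `z_n` be the smallest zero of `L̂_n`.
Since `L_n > 0` on `(-∞, 0]`, `L̂_n > 0` on `(-∞, -α-1)`, while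
`L̂_n(-α) = -L_{n-1}^{(α-1)}(-α) < 0`. By the intermediate value theorem,
`z_n < -α` and `L̂_n ≥ 0` on `(-∞, z_n]`. The identity
`L_{n-1} L̂_{n+1} = L_n L̂_n + (L_{n-1}² - L_n L_{n-2})` and Turán's inequality
`L_n L_{n-2} < L_{n-1}²` then give `L̂_{n+1} > 0` on `(-∞, z_n]`, hence `z_n < z_{n+1}`.

The recurrences behind Turán's inequality come from the form
`L_n^{(α)}(x) = ∑_{i+k=n} binom(α+n, i) (-x)^k / k!`, using Pascal's rule and
`(m+1) binom(r, m+1) = r binom(r-1, m)` for the generalized binomial coefficient `Ring.choose`.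
-/

open Finset Filter

/-- The Jacobi polynomial `P_n^{(α,β)}(x)` via its explicit sum representation. -/
noncomputable def jacobiP (α β : ℝ) (n : ℕ) (x : ℝ) : ℝ :=
  ∑ s ∈ Finset.range (n + 1),
    ((∏ j ∈ Finset.Icc (s + 1) n, (α + (j : ℝ))) / (Nat.factorial (n - s) : ℝ)) *
      ((∏ j ∈ Finset.Icc (n - s + 1) n, (β + (j : ℝ))) / (Nat.factorial s : ℝ)) *
      ((x - 1) / 2) ^ s * ((x + 1) / 2) ^ (n - s)

/-- The X₁-Jacobi polynomial `P̂_n^{(α,β)}(x)` for `n ≥ 1`, with `b = (β+α)/(β-α)`. -/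
noncomputable def X1jacobiP (α β : ℝ) (n : ℕ) (x : ℝ) : ℝ :=
  -(1 / 2) * (x - (β + α) / (β - α)) * jacobiP α β (n - 1) x +
    ((β + α) / (β - α) * jacobiP α β (n - 1) x -
        (if 2 ≤ n then jacobiP α β (n - 2) x else 0)) / (2 * (n : ℝ) - 2 + α + β)

/-- The generalized Laguerre polynomial `L_n^{(α)}(x)` via its explicit sum representation. -/
noncomputable def laguerreL (α : ℝ) (n : ℕ) (x : ℝ) : ℝ :=
  ∑ k ∈ Finset.range (n + 1),
    (-1 : ℝ) ^ k / (Nat.factorial k : ℝ) *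
      ((∏ j ∈ Finset.Icc (k + 1) n, (α + (j : ℝ))) / (Nat.factorial (n - k) : ℝ)) * x ^ k

/-- The X₁-Laguerre polynomial `L̂_n^{(α)}(x)` for `n ≥ 1`. -/
noncomputable def X1laguerreL (α : ℝ) (n : ℕ) (x : ℝ) : ℝ :=
  -(x + α + 1) * laguerreL α (n - 1) x + (if 2 ≤ n then laguerreL α (n - 2) x else 0)

/-- The physicist's Hermite polynomial `H_m(x)`. -/
noncomputable def hermiteH (m : ℕ) (x : ℝ) : ℝ :=
  (Nat.factorial m : ℝ) *
    ∑ j ∈ Finset.range (m / 2 + 1),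
      (-1 : ℝ) ^ j / ((Nat.factorial j : ℝ) * (Nat.factorial (m - 2 * j) : ℝ)) *
        (2 * x) ^ (m - 2 * j)

/-- `z 1 < z 2 < … < z n` enumerates, in increasing order, all real zeros of `f`. -/
def EnumZeros (f : ℝ → ℝ) (n : ℕ) (z : ℕ → ℝ) : Prop :=
  StrictMonoOn z (Set.Icc 1 n) ∧ ∀ x : ℝ, f x = 0 ↔ ∃ k, 1 ≤ k ∧ k ≤ n ∧ x = z k

theorem Ring.succ_mul_choose_succ {R : Type*} [Ring R] [BinomialRing R] (r : R) (m : ℕ) :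
    ((m : R) + 1) * Ring.choose r (m + 1) = r * Ring.choose (r - 1) m := by
  have h := Ring.choose_smul_choose r (n := m + 1) (k := 1) (by omega)
  rw [Nat.choose_one_right, Ring.choose_one_right, nsmul_eq_mul, Nat.add_sub_cancel] at h
  push_cast at h
  exact h

theorem prod_Icc_div_factorial_eq_choose (α : ℝ) (k i : ℕ) :
    (∏ j ∈ Icc (k + 1) (k + i), (α + j)) / (i.factorial : ℝ)
      = Ring.choose (α + ↑(k + i)) i := by
  induction i with
  | zero => simp
  | succ i ih =>
    have h := Ring.succ_mul_choose_succ (α + ↑(k + i + 1)) i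
    rw [show α + ↑(k + i + 1) - 1 = α + ↑(k + i) by push_cast; ring, ← ih] at h
    rw [← add_assoc, prod_Icc_succ_top (by omega), Nat.factorial_succ, Nat.cast_mul]
    push_cast at h ⊢
    rw [eq_comm, ← mul_right_inj' (by positivity : (i : ℝ) + 1 ≠ 0), h]
    field_simp

theorem laguerreL_eq_sum_antidiagonal (α : ℝ) (n : ℕ) (x : ℝ) :
    laguerreL α n x =
      ∑ p ∈ antidiagonal n, Ring.choose (α + n) p.1 * (-x) ^ p.2 / (p.2.factorial : ℝ) := by
  rw [← Nat.sum_antidiagonal_swap, Nat.sum_antidiagonal_eq_sum_range_succ_mk, laguerreL]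
  refine sum_congr rfl fun k hk => ?_
  dsimp only [Prod.swap]
  obtain ⟨i, rfl⟩ := Nat.exists_eq_add_of_le (Nat.lt_succ_iff.mp (mem_range.mp hk))
  rw [Nat.add_sub_cancel_left, prod_Icc_div_factorial_eq_choose, neg_pow]
  ring

theorem laguerreL_succ_param (α : ℝ) (n : ℕ) (x : ℝ) :
    laguerreL (α + 1) (n + 1) x = laguerreL (α + 1) n x + laguerreL α (n + 1) x := by
  have h₁ : α + 1 + ↑(n + 1) = α + ↑(n + 1) + 1 := by ring
  have h₂ : α + 1 + ↑n = α + ↑(n + 1) := by push_cast; ring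
  simp only [laguerreL_eq_sum_antidiagonal, Nat.sum_antidiagonal_succ (n := n), h₁, h₂,
    Ring.choose_succ_succ, Ring.choose_zero_right, add_mul, add_div, sum_add_distrib]
  ring

theorem succ_mul_laguerreL_succ (α : ℝ) (n : ℕ) (x : ℝ) :
    ((n : ℝ) + 1) * laguerreL α (n + 1) x
      = (α + n + 1) * laguerreL α n x - x * laguerreL (α + 1) n x := by
  set f : ℕ × ℕ → ℝ :=
    fun p => Ring.choose (α + ↑(n + 1)) p.1 * (-x) ^ p.2 / (p.2.factorial : ℝ)
  have hsplit : ((n + 1 : ℕ) : ℝ) * laguerreL α (n + 1) x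
      = ∑ p ∈ antidiagonal (n + 1), p.1 * f p + ∑ p ∈ antidiagonal (n + 1), p.2 * f p := by
    rw [laguerreL_eq_sum_antidiagonal, ← sum_add_distrib, mul_sum]
    refine sum_congr rfl fun p hp => ?_
    rw [← add_mul, ← Nat.cast_add, mem_antidiagonal.mp hp]
  have hfirst : ∑ p ∈ antidiagonal (n + 1), p.1 * f p = (α + n + 1) * laguerreL α n x := by
    rw [Nat.sum_antidiagonal_succ, laguerreL_eq_sum_antidiagonal, mul_sum]
    simp only [f, Nat.cast_zero, zero_mul, zero_add]
    refine sum_congr rfl fun p _ => ?_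
    have hc := Ring.succ_mul_choose_succ (α + ↑(n + 1)) p.1
    rw [show α + ↑(n + 1) - 1 = α + ↑n by push_cast; ring] at hc
    push_cast at hc ⊢
    linear_combination ((-x) ^ p.2 / (p.2.factorial : ℝ)) * hc
  have hsecond : ∑ p ∈ antidiagonal (n + 1), p.2 * f p = -x * laguerreL (α + 1) n x := by
    rw [Nat.sum_antidiagonal_succ', laguerreL_eq_sum_antidiagonal, mul_sum]
    simp only [f, Nat.cast_zero, zero_mul, zero_add]
    refine sum_congr rfl fun p _ => ?_
    rw [Nat.factorial_succ, Nat.cast_mul, pow_succ]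
    push_cast
    field_simp
    ring_nf
  rw [← Nat.cast_add_one, hsplit, hfirst, hsecond]
  ring

theorem laguerreL_recurrence (α : ℝ) (n : ℕ) (x : ℝ) :
    ((n : ℝ) + 2) * laguerreL α (n + 2) x
      = (2 * n + 3 + α - x) * laguerreL α (n + 1) x - (n + 1 + α) * laguerreL α n x := by
  have h₀ := succ_mul_laguerreL_succ α n x
  have h₁ := succ_mul_laguerreL_succ α (n + 1) x
  have hparam := laguerreL_succ_param α n x
  push_cast at h₁
  linear_combination h₁ - x * hparam - h₀

theorem laguerreL_zero (α x : ℝ) : laguerreL α 0 x = 1 := by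
  simp [laguerreL]

theorem laguerreL_one (α x : ℝ) : laguerreL α 1 x = α + 1 - x := by
  simp [laguerreL, sum_range_succ]
  ring

theorem laguerreL_pos_of_nonpos {α x : ℝ} (hα : -1 < α) (hx : x ≤ 0) (n : ℕ) :
    0 < laguerreL α n x := by
  have hprod : ∀ k, 0 < ∏ j ∈ Icc (k + 1) n, (α + (j : ℝ)) := fun k =>
    prod_pos fun j hj => by
      have : (1 : ℝ) ≤ j := by exact_mod_cast (by grind : 1 ≤ j)
      linarith
  rw [laguerreL]
  refine sum_pos' (fun k _ => ?_)
    ⟨0, by simp, by simpa using div_pos (hprod 0) (by positivity)⟩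
  have hterm : (-1 : ℝ) ^ k / k.factorial * ((∏ j ∈ Icc (k + 1) n, (α + (j : ℝ))) /
      (n - k).factorial) * x ^ k
      = (-x) ^ k * (∏ j ∈ Icc (k + 1) n, (α + (j : ℝ))) /
          (k.factorial * (n - k).factorial) := by
    rw [neg_pow]
    ring
  rw [hterm]
  have := hprod k
  have := pow_nonneg (neg_nonneg.mpr hx) k
  positivity

theorem laguerreL_turan {α : ℝ} (hα : 0 < α) (x : ℝ) (n : ℕ) :
    laguerreL α (n + 2) x * laguerreL α n x < laguerreL α (n + 1) x ^ 2 := by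
  induction n with
  | zero =>
    have h := laguerreL_recurrence α 0 x
    rw [laguerreL_zero, laguerreL_one] at h ⊢
    push_cast at h
    nlinarith [sq_nonneg (α - x)]
  | succ n ih =>
    have h₀ := laguerreL_recurrence α n x
    have h₁ := laguerreL_recurrence α (n + 1) x
    push_cast at h₁
    set L := fun k => laguerreL α k x
    have key : ((n : ℝ) + 3) * (L (n + 2) ^ 2 - L (n + 3) * L (n + 1))
        = ((n : ℝ) + 1 + α) * (L (n + 1) ^ 2 - L (n + 2) * L n)
          + (L (n + 2) - L (n + 1)) ^ 2 := by
      linear_combination (-L (n + 1)) * h₁ + L (n + 2) * h₀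
    nlinarith [sq_nonneg (L (n + 2) - L (n + 1))]

theorem continuous_laguerreL (α : ℝ) (n : ℕ) : Continuous (laguerreL α n) := by
  unfold laguerreL
  fun_prop

theorem continuous_X1laguerreL (α : ℝ) (n : ℕ) : Continuous (X1laguerreL α n) := by
  have := continuous_laguerreL α (n - 1)
  have := continuous_laguerreL α (n - 2)
  unfold X1laguerreL
  split_ifs <;> fun_prop

theorem X1laguerreL_one (α x : ℝ) : X1laguerreL α 1 x = -(x + α + 1) := by
  simp [X1laguerreL, laguerreL_zero]

theorem X1laguerreL_add_two (α x : ℝ) (n : ℕ) :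
    X1laguerreL α (n + 2) x = -(x + α + 1) * laguerreL α (n + 1) x + laguerreL α n x := by
  simp [X1laguerreL]

theorem X1laguerreL_pos_of_lt {α x : ℝ} (hα : -1 < α) (hx : x < -(α + 1)) {n : ℕ}
    (hn : 1 ≤ n) :
    0 < X1laguerreL α n x := by
  match n, hn with
  | 1, _ =>
    rw [X1laguerreL_one]
    linarith
  | n + 2, _ =>
    rw [X1laguerreL_add_two]
    have := laguerreL_pos_of_nonpos hα (by linarith) (n + 1) (x := x)
    have := laguerreL_pos_of_nonpos hα (by linarith) n (x := x)
    nlinarith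

theorem X1laguerreL_neg_at_neg {α : ℝ} (hα : 0 < α) {n : ℕ} (hn : 1 ≤ n) :
    X1laguerreL α n (-α) < 0 := by
  match n, hn with
  | 1, _ =>
    rw [X1laguerreL_one]
    linarith
  | n + 2, _ =>
    have hparam := laguerreL_succ_param (α - 1) n (-α)
    rw [sub_add_cancel] at hparam
    rw [X1laguerreL_add_two, hparam]
    have hpos :=
      laguerreL_pos_of_nonpos (α := α - 1) (x := -α) (by linarith) (by linarith) (n + 1)
    linarith

theorem X1laguerreL_succ_pos {α x : ℝ} (hα : 0 < α) (hx : x ≤ 0) {n : ℕ} (hn : 1 ≤ n)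
    (hnonneg : 0 ≤ X1laguerreL α n x) : 0 < X1laguerreL α (n + 1) x := by
  match n, hn with
  | 1, _ =>
    rw [X1laguerreL_one] at hnonneg
    rw [X1laguerreL_add_two, laguerreL_zero, laguerreL_one]
    nlinarith
  | n + 2, _ =>
    have hL₁ := laguerreL_pos_of_nonpos (by linarith) hx (n + 1) (α := α)
    have hL₂ := laguerreL_pos_of_nonpos (by linarith) hx (n + 2) (α := α)
    have key : laguerreL α (n + 1) x * X1laguerreL α (n + 3) x
        = laguerreL α (n + 2) x * X1laguerreL α (n + 2) x
          + (laguerreL α (n + 1) x ^ 2 - laguerreL α (n + 2) x * laguerreL α n x) := by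
      rw [X1laguerreL_add_two, X1laguerreL_add_two]
      ring
    have := laguerreL_turan hα x n
    have := mul_nonneg hL₂.le hnonneg
    exact pos_of_mul_pos_right (by linarith) hL₁.le

theorem EnumZeros.isLeast {f : ℝ → ℝ} {n : ℕ} {z : ℕ → ℝ} (h : EnumZeros f n z)
    (hn : 1 ≤ n) : IsLeast {x | f x = 0} (z 1) := by
  refine ⟨(h.2 _).mpr ⟨1, le_rfl, hn, rfl⟩, fun y hy => ?_⟩
  obtain ⟨k, hk, hkn, rfl⟩ := (h.2 y).mp hy
  exact h.1.monotoneOn ⟨le_rfl, hn⟩ ⟨hk, hkn⟩ hk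

theorem least_zero_lt_of_neg {f : ℝ → ℝ} (hf : Continuous f)
    (hbot : ∀ᶠ x in atBot, 0 < f x) {z b : ℝ} (hz : IsLeast {x | f x = 0} z) (hb : f b < 0) :
    z < b := by
  obtain ⟨a, hfa, hab⟩ := (hbot.and (eventually_le_atBot b)).exists
  obtain ⟨c, hc, hfc⟩ := intermediate_value_Ioo' hab hf.continuousOn ⟨hb, hfa⟩
  exact (hz.2 hfc).trans_lt hc.2

theorem nonneg_of_le_least_zero {f : ℝ → ℝ} (hf : Continuous f)
    (hbot : ∀ᶠ x in atBot, 0 < f x) {z x : ℝ} (hz : IsLeast {x | f x = 0} z) (hx : x ≤ z) :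
    0 ≤ f x :=
  not_lt.mp fun hneg => (least_zero_lt_of_neg hf hbot hz hneg).not_ge hx

theorem eventually_atBot_X1laguerreL_pos {α : ℝ} (hα : -1 < α) {n : ℕ} (hn : 1 ≤ n) :
    ∀ᶠ x in atBot, 0 < X1laguerreL α n x :=
  (eventually_lt_atBot _).mono fun _ hx => X1laguerreL_pos_of_lt hα hx hn

/-- For `α > 0`, the sequence of exceptional zeros of the X₁-Laguerre
polynomials is strictly increasing and bounded above by `-α`:
`x̂_{n,1} < x̂_{n+1,1} < -α` for every `n ≥ 1`, with `x̂_{1,1} = -(α+1)`. -/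
theorem X1laguerre_exceptional_zeros_strict_increasing
    (α : ℝ) (hα : 0 < α) (z : ℕ → ℕ → ℝ)
    (hz : ∀ n : ℕ, 1 ≤ n → EnumZeros (X1laguerreL α n) n (z n)) :
    z 1 1 = -(α + 1) ∧
      ∀ n : ℕ, 1 ≤ n → z n 1 < z (n + 1) 1 ∧ z (n + 1) 1 < -α := by
  have hleast n (hn : 1 ≤ n) := (hz n hn).isLeast hn
  have hbot n (hn : 1 ≤ n) := eventually_atBot_X1laguerreL_pos (by linarith) hn (α := α)
  have hlt n (hn : 1 ≤ n) : z n 1 < -α :=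
    least_zero_lt_of_neg (continuous_X1laguerreL α n) (hbot n hn) (hleast n hn)
      (X1laguerreL_neg_at_neg hα hn)
  refine ⟨?_, fun n hn => ⟨?_, hlt (n + 1) (by omega)⟩⟩
  · have h : X1laguerreL α 1 (z 1 1) = 0 := (hleast 1 le_rfl).1
    rw [X1laguerreL_one] at h
    linarith
  · by_contra! hle
    have hnonneg := nonneg_of_le_least_zero (continuous_X1laguerreL α n) (hbot n hn)
      (hleast n hn) hle
    have hpos := X1laguerreL_succ_pos hα (by linarith [hlt (n + 1) (by omega)]) hn hnonneg
    exact hpos.ne' (hleast (n + 1) (by omega)).1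
end

section
/- Let α > 0 and let n, k be integers with 1 ≤ k ≤ n. Then the zeros of the X₁-Jacobi polynomials converge, after scaling, to the zeros of the X₁-Laguerre polynomial: lim_{β→∞} β·(1 − x̂_{n,k}^{(α,β)})/2 = x̂_{n,n+1−k}^{(α)}, where x̂_{n,1}^{(α,β)} < … < x̂_{n,n}^{(α,β)} are the zeros of P̂_n^{(α,β)} and x̂_{n,1}^{(α)} < … < x̂_{n,n}^{(α)} are the zeros of L̂_n^{(α)}, each in increasing order. -/
open Finset Filter

/-!
With `x = 1 - 2y/β`, the rescaled X₁-Jacobi polynomial `β·P̂_n^{(α,β)}(1 - 2y/β)` tends to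
`-L̂_n^{(α)}(y)` as `β → ∞`, term by term in the explicit sums. As `L̂_n^{(α)}` has degree at most
`n` and `n` distinct zeros `x̂_i`, these are simple, so `L̂_n^{(α)}` changes sign across each.
Hence for small `δ` the rescaled Jacobi polynomial eventually changes sign on each of the `n`
disjoint intervals `(x̂_i - δ, x̂_i + δ)`, and each of them contains one of its `n` zeros. Since
`x ↦ β(1 - x)/2` reverses order, the `k`-th Jacobi zero is the one next to `x̂_{n+1-k}`.
-/

open Polynomial Topology

theorem Polynomial.eq_C_leadingCoeff_mul_prod_X_sub_C {R : Type*} [CommRing R] [IsDomain R]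
    {p : R[X]} {s : Finset R} (hdeg : p.natDegree ≤ s.card) (hroot : ∀ x ∈ s, p.IsRoot x) :
    p = C p.leadingCoeff * ∏ x ∈ s, (X - C x) := by
  rcases eq_or_ne p 0 with rfl | hp
  · simp
  refine eq_leadingCoeff_mul_of_monic_of_dvd_of_natDegree_le
    (monic_prod_of_monic _ _ fun x _ => monic_X_sub_C x) ?_ (by simpa using hdeg)
  refine (Multiset.prod_X_sub_C_dvd_iff_le_roots hp s.val).2 ?_
  exact (Multiset.le_iff_subset s.nodup).2 fun x hx => (mem_roots hp).2 (hroot x hx)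

theorem Polynomial.eval_sub_mul_eval_add_neg {p : ℝ[X]} {s : Finset ℝ} (hp : p ≠ 0)
    (hdeg : p.natDegree ≤ s.card) (hroot : ∀ x ∈ s, p.IsRoot x) {z δ : ℝ} (hz : z ∈ s)
    (hδ : 0 < δ) (hsep : ∀ x ∈ s, x ≠ z → δ < |x - z|) :
    p.eval (z - δ) * p.eval (z + δ) < 0 := by
  have hfactor := eq_C_leadingCoeff_mul_prod_X_sub_C hdeg hroot
  -- `(z - δ - x) * (z + δ - x) = (z - x) ^ 2 - δ ^ 2` is negative only for the factor `x = z`.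
  have hprod : ∏ x ∈ s, ((z - x) ^ 2 - δ ^ 2) < 0 := by
    rw [← Finset.mul_prod_erase s _ hz, sub_self, zero_pow two_ne_zero, zero_sub]
    refine mul_neg_of_neg_of_pos (by nlinarith) (Finset.prod_pos fun x hx => ?_)
    have := hsep x (Finset.mem_of_mem_erase hx) (Finset.ne_of_mem_erase hx)
    rw [← sq_abs, abs_sub_comm]
    nlinarith
  calc p.eval (z - δ) * p.eval (z + δ)
      = p.leadingCoeff ^ 2 * ∏ x ∈ s, ((z - x) ^ 2 - δ ^ 2) := by
        conv_lhs => rw [hfactor]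
        simp only [eval_mul, eval_C, eval_prod, eval_sub, eval_X]
        rw [mul_mul_mul_comm, ← Finset.prod_mul_distrib, sq]
        exact congrArg _ (Finset.prod_congr rfl fun x _ => by ring)
    _ < 0 := mul_neg_of_pos_of_neg (sq_pos_of_ne_zero (leadingCoeff_ne_zero.2 hp)) hprod

theorem exists_mem_Ioo_eq_zero_of_mul_neg {f : ℝ → ℝ} {u v : ℝ} (huv : u ≤ v)
    (hf : ContinuousOn f (Set.Icc u v)) (h : f u * f v < 0) : ∃ x ∈ Set.Ioo u v, f x = 0 := by
  rcases mul_neg_iff.1 h with ⟨hu, hv⟩ | ⟨hu, hv⟩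
  · exact intermediate_value_Ioo' huv hf ⟨hv, hu⟩
  · exact intermediate_value_Ioo huv hf ⟨hu, hv⟩

theorem StrictMonoOn.apply_eq_of_mapsTo {α : Type*} [LinearOrder α] {s : Set α} (hs : s.Finite)
    {σ : α → α} (hσ : StrictMonoOn σ s) (hmaps : Set.MapsTo σ s s) {i : α} (hi : i ∈ s) :
    σ i = i :=
  haveI := hs.to_subtype
  congrArg Subtype.val
    (StrictMono.apply_eq (f := hmaps.restrict) (x := ⟨i, hi⟩) fun a b hab => hσ a.2 b.2 hab)

theorem StrictMonoOn.exists_pos_add_lt_sub {ι : Type*} [Preorder ι] {s : Set ι}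
    (hs : s.Finite) {z : ι → ℝ} (hz : StrictMonoOn z s) {ε : ℝ} (hε : 0 < ε) :
    ∃ δ, 0 < δ ∧ δ ≤ ε ∧ ∀ i ∈ s, ∀ j ∈ s, i < j → z i + δ < z j - δ := by
  have hgap : ∀ᶠ δ in 𝓝 (0 : ℝ), ∀ i ∈ s, ∀ j ∈ s, i < j → z i + δ < z j - δ := by
    simp only [eventually_all_finite hs, eventually_imp_distrib_left]
    intro i hi j hj hij
    exact (tendsto_id.const_add (z i)).eventually_lt (tendsto_id.const_sub (z j))
      (by simpa using hz hi hj hij)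
  obtain ⟨δ, ⟨hδε, hδgap⟩, hδ⟩ :=
    (((eventually_le_nhds hε).and hgap).filter_mono nhdsWithin_le_nhds).and
      (self_mem_nhdsWithin (s := Set.Ioi 0)) |>.exists
  exact ⟨δ, hδ, hδε, hδgap⟩

namespace EnumZeros

variable {f : ℝ → ℝ} {n : ℕ} {z : ℕ → ℝ}

theorem const_mul (hz : EnumZeros f n z) {c : ℝ} (hc : c ≠ 0) :
    EnumZeros (fun x => c * f x) n z :=
  ⟨hz.1, fun x => by rw [mul_eq_zero, or_iff_right hc, hz.2]⟩

theorem comp_sub_mul (hz : EnumZeros f n z) (b : ℝ) {a : ℝ} (ha : 0 < a) :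
    EnumZeros (fun y => f (b - a * y)) n (fun j => (b - z (n + 1 - j)) / a) := by
  refine ⟨fun i hi j hj hij => ?_, fun y => ?_⟩
  · obtain ⟨hi1, hin⟩ := hi
    obtain ⟨hj1, hjn⟩ := hj
    have : z (n + 1 - j) < z (n + 1 - i) :=
      hz.1 ⟨by omega, by omega⟩ ⟨by omega, by omega⟩ (by omega)
    exact div_lt_div_of_pos_right (by linarith) ha
  · rw [hz.2]
    constructor
    · rintro ⟨k, hk1, hkn, hk⟩
      refine ⟨n + 1 - k, by omega, by omega, ?_⟩
      simp only [show n + 1 - (n + 1 - k) = k by omega, ← hk]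
      field_simp
      ring
    · rintro ⟨j, hj1, hjn, rfl⟩
      refine ⟨n + 1 - j, by omega, by omega, ?_⟩
      field_simp
      ring

theorem eval_sub_mul_eval_add_neg {p : ℝ[X]} (hz : EnumZeros (fun x => p.eval x) n z)
    (hdeg : p.natDegree ≤ n) {δ : ℝ} (hδ : 0 < δ)
    (hsep : ∀ i ∈ Set.Icc 1 n, ∀ j ∈ Set.Icc 1 n, i < j → z i + δ < z j - δ)
    {i : ℕ} (hi : i ∈ Set.Icc 1 n) : p.eval (z i - δ) * p.eval (z i + δ) < 0 := by
  classical
  have hinj : Set.InjOn z (Finset.Icc 1 n) := by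
    rw [Finset.coe_Icc]
    exact hz.1.injOn
  have hcard : ((Finset.Icc 1 n).image z).card = n := by
    rw [Finset.card_image_of_injOn hinj, Nat.card_Icc, Nat.add_sub_cancel]
  have hp : p ≠ 0 := by
    rintro rfl
    obtain ⟨x, hx⟩ := ((Set.finite_Icc 1 n).image z).infinite_compl.nonempty
    obtain ⟨k, hk1, hkn, rfl⟩ := (hz.2 x).1 eval_zero
    exact hx ⟨k, ⟨hk1, hkn⟩, rfl⟩
  refine Polynomial.eval_sub_mul_eval_add_neg hp (hcard.symm ▸ hdeg) ?_
    (Finset.mem_image_of_mem z (Finset.mem_Icc.2 hi)) hδ ?_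
  · intro x hx
    obtain ⟨k, hk, rfl⟩ := Finset.mem_image.1 hx
    exact (hz.2 _).2 ⟨k, (Finset.mem_Icc.1 hk).1, (Finset.mem_Icc.1 hk).2, rfl⟩
  · intro x hx hne
    obtain ⟨j, hj, rfl⟩ := Finset.mem_image.1 hx
    rw [Finset.mem_Icc] at hj
    rcases lt_trichotomy i j with hij | rfl | hji
    · linarith [hsep i hi j hj hij, le_abs_self (z j - z i)]
    · exact absurd rfl hne
    · linarith [hsep j hj i hi hji, neg_abs_le (z j - z i)]

/-- Each of the `n` disjoint intervals contains a zero of `f`; as `f` has only `n` zeros, the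
`i`-th interval contains the `i`-th one. -/
theorem mem_Ioo_of_mul_neg (hz : EnumZeros f n z) (hf : Continuous f) {c : ℕ → ℝ} {δ : ℝ}
    (hδ : 0 < δ) (hc : ∀ i ∈ Set.Icc 1 n, ∀ j ∈ Set.Icc 1 n, i < j → c i + δ < c j - δ)
    (hsign : ∀ i ∈ Set.Icc 1 n, f (c i - δ) * f (c i + δ) < 0) {i : ℕ} (hi : i ∈ Set.Icc 1 n) :
    z i ∈ Set.Ioo (c i - δ) (c i + δ) := by
  have hzero : ∀ j ∈ Set.Icc 1 n, ∃ x ∈ Set.Ioo (c j - δ) (c j + δ), f x = 0 := fun j hj =>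
    exists_mem_Ioo_eq_zero_of_mul_neg (by linarith) hf.continuousOn (hsign j hj)
  choose! x hx hfx using hzero
  have hroot : ∀ j ∈ Set.Icc 1 n, ∃ k ∈ Set.Icc 1 n, x j = z k := fun j hj => by
    obtain ⟨k, hk1, hkn, hk⟩ := (hz.2 _).1 (hfx j hj)
    exact ⟨k, ⟨hk1, hkn⟩, hk⟩
  choose! σ hσmaps hσ using hroot
  have hσmono : StrictMonoOn σ (Set.Icc 1 n) := fun j hj l hl hjl =>
    (hz.1.lt_iff_lt (hσmaps j hj) (hσmaps l hl)).1 <| by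
      rw [← hσ j hj, ← hσ l hl]
      linarith [(hx j hj).2, (hx l hl).1, hc j hj l hl hjl]
  simpa only [hσ i hi, hσmono.apply_eq_of_mapsTo (Set.finite_Icc 1 n) hσmaps hi] using hx i hi

end EnumZeros

noncomputable def laguerrePoly (α : ℝ) (m : ℕ) : ℝ[X] :=
  ∑ k ∈ Finset.range (m + 1), C ((-1 : ℝ) ^ k / (Nat.factorial k : ℝ) *
    ((∏ j ∈ Finset.Icc (k + 1) m, (α + (j : ℝ))) / (Nat.factorial (m - k) : ℝ))) * X ^ k

noncomputable def X1laguerrePoly (α : ℝ) (n : ℕ) : ℝ[X] :=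
  -(X + C (α + 1)) * laguerrePoly α (n - 1) + if 2 ≤ n then laguerrePoly α (n - 2) else 0

section Laguerre

variable (α : ℝ)

theorem eval_laguerrePoly (m : ℕ) (x : ℝ) : (laguerrePoly α m).eval x = laguerreL α m x := by
  simp [laguerrePoly, laguerreL, eval_finsetSum, mul_assoc]

theorem natDegree_laguerrePoly_le (m : ℕ) : (laguerrePoly α m).natDegree ≤ m :=
  natDegree_sum_le_of_forall_le _ _ fun k hk =>
    (natDegree_C_mul_X_pow_le _ k).trans (Nat.lt_succ_iff.1 (Finset.mem_range.1 hk))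

theorem eval_X1laguerrePoly (n : ℕ) (x : ℝ) :
    (X1laguerrePoly α n).eval x = X1laguerreL α n x := by
  simp only [X1laguerrePoly, X1laguerreL, eval_add, eval_mul, eval_neg, eval_X, eval_C,
    eval_laguerrePoly, apply_ite (eval x), eval_zero]
  ring

theorem natDegree_X1laguerrePoly_le {n : ℕ} (hn : 1 ≤ n) :
    (X1laguerrePoly α n).natDegree ≤ n := by
  refine natDegree_add_le_of_degree_le ?_ ?_
  · refine (natDegree_mul_le_of_le ((natDegree_neg _).trans (natDegree_X_add_C _)).le
      (natDegree_laguerrePoly_le α (n - 1))).trans (by omega)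
  · split_ifs
    · exact (natDegree_laguerrePoly_le α _).trans (by omega)
    · simp

end Laguerre

theorem EnumZeros.X1laguerreL_sub_mul_add_neg {α : ℝ} {n : ℕ} {z : ℕ → ℝ}
    (hz : EnumZeros (X1laguerreL α n) n z) (hn : 1 ≤ n) {δ : ℝ} (hδ : 0 < δ)
    (hsep : ∀ i ∈ Set.Icc 1 n, ∀ j ∈ Set.Icc 1 n, i < j → z i + δ < z j - δ)
    {i : ℕ} (hi : i ∈ Set.Icc 1 n) : X1laguerreL α n (z i - δ) * X1laguerreL α n (z i + δ) < 0 := by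
  have hz' : EnumZeros (fun x => (X1laguerrePoly α n).eval x) n z := by
    simpa only [eval_X1laguerrePoly] using hz
  simpa only [eval_X1laguerrePoly] using
    hz'.eval_sub_mul_eval_add_neg (natDegree_X1laguerrePoly_le α hn) hδ hsep hi

theorem tendsto_add_div_add_atTop (a b : ℝ) :
    Tendsto (fun x : ℝ => (x + a) / (x + b)) atTop (𝓝 1) := by
  have h (c : ℝ) : Tendsto (fun x : ℝ => 1 + c * x⁻¹) atTop (𝓝 1) := by
    simpa using (tendsto_inv_atTop_zero.const_mul c).const_add 1
  have hquot := (h a).div (h b) one_ne_zero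
  rw [div_one] at hquot
  refine hquot.congr' ?_
  filter_upwards [eventually_ne_atTop 0] with x hx
  simp only [Pi.div_apply]
  field_simp
theorem tendsto_jacobiP_laguerreL (α y : ℝ) (m : ℕ) :
    Tendsto (fun β : ℝ => jacobiP α β m (1 - 2 / β * y)) atTop (𝓝 (laguerreL α m y)) := by
  set A : ℕ → ℝ := fun s =>
    (∏ j ∈ Finset.Icc (s + 1) m, (α + (j : ℝ))) / (Nat.factorial (m - s) : ℝ) /
      (Nat.factorial s : ℝ) * (-y) ^ s
  have hterm : ∀ s ∈ Finset.range (m + 1), Tendsto (fun β : ℝ =>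
      A s * (∏ j ∈ Finset.Icc (m - s + 1) m, (β + j) / (β + 0)) * ((β + -y) / (β + 0)) ^ (m - s))
      atTop (𝓝 (A s)) := fun s _ => by
    have := ((tendsto_const_nhds (x := A s)).mul (tendsto_finsetProd (Finset.Icc (m - s + 1) m)
      fun j _ => tendsto_add_div_add_atTop (j : ℝ) 0)).mul
      ((tendsto_add_div_add_atTop (-y) 0).pow (m - s))
    rwa [Finset.prod_const_one, one_pow, mul_one, mul_one] at this
  have hlim : laguerreL α m y = ∑ s ∈ Finset.range (m + 1), A s := by
    refine Finset.sum_congr rfl fun s _ => ?_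
    rw [neg_pow]
    ring
  rw [hlim]
  refine (tendsto_finsetSum _ hterm).congr' ?_
  filter_upwards [eventually_ne_atTop 0] with β hβ
  refine Finset.sum_congr rfl fun s hs => ?_
  have hcard : (Finset.Icc (m - s + 1) m).card = s := by
    rw [Nat.card_Icc]
    have := Finset.mem_range.1 hs
    omega
  have hx₁ : (1 - 2 / β * y - 1) / 2 = -y / β := by ring
  have hx₂ : (1 - 2 / β * y + 1) / 2 = (β + -y) / β := by field_simp; ring
  rw [add_zero, Finset.prod_div_distrib, Finset.prod_const, hcard, hx₁, hx₂, div_pow, div_pow]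
  simp only [A]
  field_simp

theorem tendsto_mul_X1jacobiP (α y : ℝ) (n : ℕ) :
    Tendsto (fun β : ℝ => β * X1jacobiP α β n (1 - 2 / β * y)) atTop
      (𝓝 (-X1laguerreL α n y)) := by
  have hP (m : ℕ) := tendsto_jacobiP_laguerreL α y m
  have hP₂ : Tendsto (fun β : ℝ => if 2 ≤ n then jacobiP α β (n - 2) (1 - 2 / β * y) else 0)
      atTop (𝓝 (if 2 ≤ n then laguerreL α (n - 2) y else 0)) := by
    split_ifs
    · exact hP (n - 2)
    · exact tendsto_const_nhds
  have hb : Tendsto (fun β : ℝ => (β + α) / (β - α)) atTop (𝓝 1) := by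
    simpa only [sub_eq_add_neg] using tendsto_add_div_add_atTop α (-α)
  have hscale : Tendsto (fun β : ℝ => β / (2 * n - 2 + α + β)) atTop (𝓝 1) := by
    simpa only [add_zero, add_comm _ (_ : ℝ)] using tendsto_add_div_add_atTop 0 (2 * n - 2 + α)
  have hshift : Tendsto (fun β : ℝ => β * (1 - 2 / β * y - (β + α) / (β - α))) atTop
      (𝓝 (-2 * (y + α))) := by
    have h := (tendsto_add_div_add_atTop 0 (-α)).const_mul (-2 * α) |>.const_add (-2 * y)
    simp only [add_zero, ← sub_eq_add_neg, mul_one] at h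
    refine (by convert h using 2; ring : Tendsto _ _ (𝓝 (-2 * (y + α)))).congr' ?_
    filter_upwards [eventually_ne_atTop 0, eventually_ne_atTop α] with β hβ hβα
    have : β - α ≠ 0 := sub_ne_zero.2 hβα
    field_simp
    ring
  have h := ((hshift.mul (hP (n - 1))).const_mul (-(1 / 2))).add
    (hscale.mul ((hb.mul (hP (n - 1))).sub hP₂))
  convert h using 1
  · funext β
    simp only [X1jacobiP]
    ring
  · rw [X1laguerreL]
    congr 1
    ring

theorem continuous_X1jacobiP (α β : ℝ) (n : ℕ) : Continuous (X1jacobiP α β n) := by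
  unfold X1jacobiP jacobiP
  split_ifs <;> fun_prop

theorem X1jacobi_zeros_tendsto_X1laguerre_zeros_general
    (α : ℝ) (n k : ℕ) (hk : 1 ≤ k) (hkn : k ≤ n)
    (zJ : ℝ → ℕ → ℝ) (zL : ℕ → ℝ)
    (hzJ : ∀ β : ℝ, α < β → EnumZeros (X1jacobiP α β n) n (zJ β))
    (hzL : EnumZeros (X1laguerreL α n) n zL) :
    Filter.Tendsto (fun β : ℝ => β * (1 - zJ β k) / 2) Filter.atTop
      (nhds (zL (n + 1 - k))) := by
  rw [Metric.tendsto_nhds]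
  intro ε hε
  obtain ⟨δ, hδ, hδε, hsep⟩ := hzL.1.exists_pos_add_lt_sub (Set.finite_Icc 1 n) hε
  have hsignJ : ∀ᶠ β in atTop, ∀ i ∈ Set.Icc 1 n,
      β * X1jacobiP α β n (1 - 2 / β * (zL i - δ)) *
        (β * X1jacobiP α β n (1 - 2 / β * (zL i + δ))) < 0 := by
    refine (eventually_all_finite (Set.finite_Icc 1 n)).2 fun i hi => ?_
    refine ((tendsto_mul_X1jacobiP α _ n).mul (tendsto_mul_X1jacobiP α _ n)).eventually_lt_const ?_
    simpa only [neg_mul_neg] using hzL.X1laguerreL_sub_mul_add_neg (hk.trans hkn) hδ hsep hi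
  filter_upwards [eventually_gt_atTop α, eventually_gt_atTop 0, hsignJ] with β hβα hβ hsignβ
  have hzero := ((hzJ β hβα).comp_sub_mul 1 (div_pos two_pos hβ)).const_mul hβ.ne'
  have hk' : n + 1 - k ∈ Set.Icc 1 n := ⟨by omega, by omega⟩
  have hmem := hzero.mem_Ioo_of_mul_neg (by have := continuous_X1jacobiP α β n; fun_prop) hδ hsep
    hsignβ hk'
  have hscaled : (1 - zJ β (n + 1 - (n + 1 - k))) / (2 / β) = β * (1 - zJ β k) / 2 := by
    rw [Nat.sub_sub_self (by omega : k ≤ n + 1)]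
    field_simp
  rw [hscaled] at hmem
  rw [Real.dist_eq, abs_sub_lt_iff]
  constructor <;> linarith [hmem.1, hmem.2]

/-- For `α > 0` and `1 ≤ k ≤ n`, the zeros of the X₁-Jacobi polynomials
converge, after scaling, to the zeros of the X₁-Laguerre polynomial:
`lim_{β→∞} β(1 - x̂_{n,k}^{(α,β)})/2 = x̂_{n,n+1-k}^{(α)}`. -/
theorem X1jacobi_zeros_tendsto_X1laguerre_zeros
    (α : ℝ) (hα : 0 < α) (n k : ℕ) (hk : 1 ≤ k) (hkn : k ≤ n)
    (zJ : ℝ → ℕ → ℝ) (zL : ℕ → ℝ)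
    (hzJ : ∀ β : ℝ, α < β → EnumZeros (X1jacobiP α β n) n (zJ β))
    (hzL : EnumZeros (X1laguerreL α n) n zL) :
    Filter.Tendsto (fun β : ℝ => β * (1 - zJ β k) / 2) Filter.atTop
      (nhds (zL (n + 1 - k))) :=
  X1jacobi_zeros_tendsto_X1laguerre_zeros_general α n k hk hkn zJ zL hzJ hzL
end
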